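/- arXiv:1208.2089 — 3 statements merged into one kernel-verified Lean document; each statement's English description precedes it below -/
import Mathlib

section
/- Let J ⊆ [0,1] be a ×d-invariant set with digit set E, 1 < #E < d, and let λ denote Lebesgue measure on ℝ². For λ-almost every pair (x,y) ∈ ℝ² with x ≠ y, the image of J under the unique affine map f sending x to 0 and y to 1 contains no rational number. -/
open MeasureTheory

/-- The ×d-invariant set of reals in [0,1] whose base-d digits all lie in `E`. -/
def timesdSet (d : ℕ) (E : Finset ℕ) : Set ℝ :=
  {x : ℝ | ∃ a : ℕ → ℕ, (∀ i, a i ∈ E) ∧ x = ∑' i : ℕ, (a i : ℝ) / d ^ (i + 1)}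

/-!
The set `J` is Lebesgue-null: its points with prescribed first `n` digits lie in an interval of
length `d⁻ⁿ`, so `J` is covered by `(#E)ⁿ` such intervals, of total length `(#E / d)ⁿ → 0`.
For a fixed `r`, `f_{x,y}(t) = r` means `t = (1 - r) x + r y`, a surjective linear function of
`(x, y)`; the pushforward of Lebesgue measure on `ℝ²` under it is a multiple (possibly `∞`) of
Lebesgue measure on `ℝ`, so its preimage of the null set `J` is null. There are countably many `r`.
-/

open Set Finset
open scoped ENNReal

namespace Real

theorem ofDigits_mem_Icc {b : ℕ} (a : ℕ → Fin b) (n : ℕ) :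
    ofDigits a ∈ Icc (∑ i : Fin n, ofDigitsTerm a i)
      (∑ i : Fin n, ofDigitsTerm a i + ((b : ℝ) ^ n)⁻¹) := by
  rw [ofDigits_eq_sum_add_ofDigits a n, Fin.sum_univ_eq_sum_range (ofDigitsTerm a)]
  have h₀ := ofDigits_nonneg fun i ↦ a (i + n)
  have h₁ := ofDigits_le_one fun i ↦ a (i + n)
  constructor
  · have : 0 ≤ ((b : ℝ) ^ n)⁻¹ := by positivity
    nlinarith
  · gcongr
    exact mul_le_of_le_one_right (by positivity) h₁

theorem volume_ofDigits_image_le {b : ℕ} (D : Finset (Fin b)) (n : ℕ) :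
    volume (ofDigits '' {a | ∀ i, a i ∈ D}) ≤ ((#D : ℝ≥0∞) / b) ^ n := by
  rcases Nat.eq_zero_or_pos b with rfl | hb
  · simp [Set.eq_empty_of_isEmpty]
  let left (p : Fin n → Fin b) : ℝ := ∑ i : Fin n, (p i : ℝ) * ((b : ℝ) ^ (i + 1 : ℕ))⁻¹
  have cover : ofDigits '' {a | ∀ i, a i ∈ D} ⊆
      ⋃ p ∈ Fintype.piFinset fun _ ↦ D, Icc (left p) (left p + ((b : ℝ) ^ n)⁻¹) := by
    rintro _ ⟨a, ha, rfl⟩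
    exact mem_biUnion (x := fun i : Fin n ↦ a i) (Fintype.mem_piFinset.2 fun i ↦ ha i)
      (ofDigits_mem_Icc a n)
  calc volume (ofDigits '' {a | ∀ i, a i ∈ D})
      ≤ ∑ p ∈ Fintype.piFinset (fun _ : Fin n ↦ D),
          volume (Icc (left p) (left p + ((b : ℝ) ^ n)⁻¹)) :=
        (measure_mono cover).trans (measure_biUnion_finset_le _ _)
    _ = (#D : ℝ≥0∞) ^ n * ((b : ℝ≥0∞) ^ n)⁻¹ := by
        simp only [volume_Icc, add_sub_cancel_left, sum_const, Fintype.card_piFinset,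
          prod_const, card_univ, Fintype.card_fin, nsmul_eq_mul, Nat.cast_pow]
        rw [ENNReal.ofReal_inv_of_pos (by positivity), ENNReal.ofReal_pow (by positivity),
          ENNReal.ofReal_natCast]
    _ = ((#D : ℝ≥0∞) / b) ^ n := by
        rw [ENNReal.div_eq_inv_mul, mul_pow, ENNReal.inv_pow, mul_comm]

theorem volume_ofDigits_image_eq_zero {b : ℕ} {D : Finset (Fin b)} (hD : #D < b) :
    volume (ofDigits '' {a | ∀ i, a i ∈ D}) = 0 := by
  have hlt : (#D : ℝ≥0∞) / b < 1 :=
    (ENNReal.div_lt_iff (by simp; omega) (by simp)).2 (by simpa using hD)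
  exact le_antisymm (ge_of_tendsto' (ENNReal.tendsto_pow_atTop_nhds_zero_of_lt_one hlt)
    (volume_ofDigits_image_le D)) bot_le

end Real

theorem timesdSet_subset_ofDigits_image {d : ℕ} {E : Finset ℕ} (hE : ∀ e ∈ E, e < d) :
    timesdSet d E ⊆ Real.ofDigits '' {a | ∀ i, a i ∈ ({k : Fin d | (k : ℕ) ∈ E} : Finset _)} := by
  rintro _ ⟨a, ha, rfl⟩
  refine ⟨fun i ↦ ⟨a i, hE _ (ha i)⟩, fun i ↦ by simpa using ha i, ?_⟩
  simp only [Real.ofDigits, Real.ofDigitsTerm, div_eq_mul_inv]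

theorem volume_timesdSet {d : ℕ} {E : Finset ℕ} (hE : ∀ e ∈ E, e < d) (hEd : #E < d) :
    volume (timesdSet d E) = 0 := by
  have hcard : #({k : Fin d | (k : ℕ) ∈ E} : Finset _) ≤ #E :=
    card_le_card_of_injOn Fin.val (fun k hk ↦ by simpa using hk) Fin.val_injective.injOn
  exact measure_mono_null (timesdSet_subset_ofDigits_image hE)
    (Real.volume_ofDigits_image_eq_zero (hcard.trans_lt hEd))

section HaarMeasure

variable {E F : Type*} [NormedAddCommGroup E] [MeasurableSpace E] [BorelSpace E]
  [NormedSpace ℝ E] [LocallyCompactSpace E] [NormedAddCommGroup F] [MeasurableSpace F]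
  [BorelSpace F] [NormedSpace ℝ F] {μ : Measure E} {ν : Measure F}
  [μ.IsAddHaarMeasure] [ν.IsAddHaarMeasure]

theorem ae_comp_linearMap_notMem {L : E →ₗ[ℝ] F} (hL : Function.Surjective L) {s : Set F}
    (hs : ν s = 0) : ∀ᵐ x ∂μ, L x ∉ s := by
  have h := (ae_comp_linearMap_mem_iff L μ ν hL (measurableSet_toMeasurable ν s).compl).2
    (measure_eq_zero_iff_ae_notMem.1 ((measure_toMeasurable s).trans hs))
  filter_upwards [h] with x hx hxs using hx (subset_toMeasurable ν s hxs)

end HaarMeasure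

/-- `f_{x,y}⁻¹ r`, as a linear function of `(x, y)`. -/
def interpolationMap (r : ℝ) : ℝ × ℝ →ₗ[ℝ] ℝ :=
  (1 - r) • LinearMap.fst ℝ ℝ ℝ + r • LinearMap.snd ℝ ℝ ℝ

theorem interpolationMap_apply (r : ℝ) (z : ℝ × ℝ) :
    interpolationMap r z = (1 - r) * z.1 + r * z.2 := rfl

theorem interpolationMap_surjective (r : ℝ) : Function.Surjective (interpolationMap r) :=
  fun t ↦ ⟨(t, t), by rw [interpolationMap_apply]; ring⟩

theorem interpolationMap_eq_of_div_eq {r t : ℝ} {z : ℝ × ℝ} (hz : z.1 ≠ z.2)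
    (h : (t - z.1) / (z.2 - z.1) = r) : interpolationMap r z = t := by
  rw [interpolationMap_apply, ← h]
  field_simp [sub_ne_zero.2 hz.symm]
  ring

theorem random_similarity_no_rationals_general (d : ℕ) (E : Finset ℕ)
    (hE : ∀ e ∈ E, e < d) (hcard' : E.card < d) :
    ∀ᵐ z : ℝ × ℝ ∂(volume : Measure (ℝ × ℝ)), z.1 ≠ z.2 →
      ∀ r : ℚ, (r : ℝ) ∉ (fun t => (t - z.1) / (z.2 - z.1)) '' timesdSet d E := by
  have h : ∀ᵐ z : ℝ × ℝ, ∀ r : ℚ, interpolationMap r z ∉ timesdSet d E :=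
    ae_all_iff.2 fun r ↦ ae_comp_linearMap_notMem (interpolationMap_surjective r)
      (volume_timesdSet hE hcard')
  filter_upwards [h] with z hz hne r ⟨t, ht, hrt⟩
  exact hz r (interpolationMap_eq_of_div_eq hne hrt ▸ ht)

theorem random_similarity_no_rationals (d : ℕ) (hd : 2 ≤ d) (E : Finset ℕ)
    (hE : ∀ e ∈ E, e < d) (hcard : 1 < E.card) (hcard' : E.card < d) :
    ∀ᵐ z : ℝ × ℝ ∂(volume : Measure (ℝ × ℝ)), z.1 ≠ z.2 →
      ∀ r : ℚ, (r : ℝ) ∉ (fun t => (t - z.1) / (z.2 - z.1)) '' timesdSet d E :=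
  random_similarity_no_rationals_general d E hE hcard'
end

section
/- Let E be a finite alphabet, and for each letter a ∈ E let q_a ≥ 2 be an integer such that Σ_{a∈E} q_a^{-δ} = 1 for some δ > 0. Let ω ∈ Eᴺ be random with i.i.d. coordinates distributed as P(ωₖ = a) = q_a^{-δ}. Fix m ∈ ℕ, m ≥ 1, and ℓ₀ > 0. Then the probability that there exists r ≥ 1 with ω₁…ω_r = ω_{m+1}…ω_{m+r} and Σ_{i=1}^r log(q_{ω_i}) ≥ ℓ₀ is at most e^{-δℓ₀}. -/
open MeasureTheory Real ENNReal

lemma prod_shift_periodic {M : Type*} [CommMonoid M] (f : ℕ → M) (m : ℕ)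
    (hf : ∀ j, f (j + m) = f j) (r : ℕ) :
    ∏ j ∈ Finset.range m, f (r + j) = ∏ j ∈ Finset.range m, f j := by
  induction r with
  | zero => simp
  | succ r ih =>
    rw [← ih]
    rcases Nat.eq_zero_or_pos m with h | h
    · simp [h]
    obtain ⟨n, rfl⟩ : ∃ n, m = n + 1 := ⟨m - 1, (Nat.succ_pred_eq_of_pos h).symm⟩
    rw [Finset.prod_range_succ, Finset.prod_range_succ']
    have h2 : f (r + 1 + n) = f r := by
      have : r + 1 + n = r + (n + 1) := by ring
      rw [this, hf]
    rw [h2]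
    have h3 : ∏ j ∈ Finset.range n, f (r + (j + 1)) = ∏ j ∈ Finset.range n, f (r + 1 + j) :=
      Finset.prod_congr rfl fun j _ => by rw [show r + (j + 1) = r + 1 + j by ring]
    rw [h3]
    simpa using mul_comm ((Finset.range n).prod fun j => f (r + 1 + j)) (f r)

theorem repeat_probability_bound (E : Type*) [Fintype E] [MeasurableSpace E] [Nonempty E]
    (q : E → ℕ) (hq : ∀ a, 2 ≤ q a) (δ : ℝ) (hδ : 0 < δ)
    (hsum : ∑ a : E, (q a : ℝ) ^ (-δ) = 1)
    (μ : Measure (ℕ → E)) [IsProbabilityMeasure μ]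
    (hcyl : ∀ (n : ℕ) (w : Fin n → E),
      μ {ω | ∀ i : Fin n, ω i = w i} =
        ENNReal.ofReal (∏ i : Fin n, (q (w i) : ℝ) ^ (-δ)))
    (m : ℕ) (hm : 1 ≤ m) (ℓ₀ : ℝ) (hℓ₀ : 0 < ℓ₀) :
    μ {ω | ∃ r : ℕ, 1 ≤ r ∧ (∀ i < r, ω i = ω (m + i)) ∧
        ℓ₀ ≤ ∑ i ∈ Finset.range r, Real.log (q (ω i))} ≤
      ENNReal.ofReal (Real.exp (-δ * ℓ₀)) := by
  classical
  have hm0 : 0 < m := hm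
  have hq1 : ∀ a : E, (1:ℝ) ≤ (q a : ℝ) := fun a => by
    have := hq a; exact_mod_cast le_trans (by norm_num) (Nat.cast_le.mpr this)
  have hqpos : ∀ a : E, (0:ℝ) < (q a : ℝ) := fun a => lt_of_lt_of_le one_pos (hq1 a)
  set c : E → ℝ≥0∞ := fun a => ENNReal.ofReal ((q a : ℝ) ^ (-δ)) with hc
  set K : ℝ≥0∞ := ENNReal.ofReal (Real.exp (-δ * ℓ₀)) with hK
  set L : ℕ → (ℕ → E) → ℝ := fun r ω => ∑ i ∈ Finset.range r, Real.log (q (ω i)) with hL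
  have Lmono : ∀ (ω : ℕ → E) (r s : ℕ), r ≤ s → L r ω ≤ L s ω := by
    intro ω r s hrs
    apply Finset.sum_le_sum_of_subset_of_nonneg (Finset.range_subset_range.2 hrs)
    intro i _ _
    exact Real.log_nonneg (hq1 _)
  set cross : ℕ → (ℕ → E) → Prop := fun r ω => ℓ₀ ≤ L r ω ∧ L (r-1) ω < ℓ₀ with hcross
  have cross_unique : ∀ (ω : ℕ → E) (r s : ℕ), cross r ω → cross s ω → r = s := by
    intro ω r s hr hs
    by_contra hne
    rcases lt_or_gt_of_ne hne with h | h
    · exact absurd (le_trans hr.1 (Lmono ω r (s-1) (by omega))) (not_le.2 hs.2)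
    · exact absurd (le_trans hs.1 (Lmono ω s (r-1) (by omega))) (not_le.2 hr.2)
  set per : (Fin m → E) → ℕ → E := fun v j => v ⟨j % m, Nat.mod_lt j hm0⟩ with hperdef
  have hperiod : ∀ (v : Fin m → E) (j : ℕ), per v (j + m) = per v j := by
    intro v j
    simp only [hperdef, Nat.add_mod_right]
  have hper_lt : ∀ (v : Fin m → E) (j : ℕ) (hj : j < m), per v j = v ⟨j, hj⟩ := by
    intro v j hj
    simp only [hperdef]
    congr 1
    exact Fin.ext (Nat.mod_eq_of_lt hj)
  set B : ℕ → Set (ℕ → E) := fun r => {ω | (∀ i < r, ω i = ω (m + i)) ∧ cross r ω} with hB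
  set S : ℕ → (Fin m → E) → Set (ℕ → E) := fun r v =>
    if cross r (per v) then {ω | ∀ j : Fin (m+r), ω j = per v j} else ∅ with hS
  set t : ℕ → (Fin m → E) → ℝ≥0∞ := fun r v =>
    if cross r (per v) then K * ∏ i : Fin m, c (v i) else 0 with ht
  -- c as exponential
  have hcexp : ∀ a : E, c a = ENNReal.ofReal (Real.exp (-δ * Real.log (q a))) := by
    intro a
    show ENNReal.ofReal ((q a : ℝ) ^ (-δ)) = _
    congr 1
    rw [Real.rpow_def_of_pos (hqpos a)]
    ring_nf
  -- sum of c = 1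
  have hc1 : ∑ a : E, c a = 1 := by
    show ∑ a : E, ENNReal.ofReal ((q a : ℝ) ^ (-δ)) = 1
    rw [← ENNReal.ofReal_sum_of_nonneg (fun a _ => Real.rpow_nonneg (le_of_lt (hqpos a)) _)]
    rw [hsum, ENNReal.ofReal_one]
  -- sum over words of length m
  have hvsum : ∑ v : Fin m → E, ∏ i : Fin m, c (v i) = 1 := by
    have h := Finset.prod_univ_sum (fun _ : Fin m => (Finset.univ : Finset E))
      (fun (_ : Fin m) (a : E) => c a)
    rw [Fintype.piFinset_univ] at h
    simp only [hc1, Finset.prod_const_one] at h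
    exact h.symm
  -- event inclusion
  have hsub : {ω : ℕ → E | ∃ r : ℕ, 1 ≤ r ∧ (∀ i < r, ω i = ω (m + i)) ∧
      ℓ₀ ≤ ∑ i ∈ Finset.range r, Real.log (q (ω i))} ⊆ ⋃ r, B r := by
    rintro ω ⟨r, hr1, hmatch, hsum'⟩
    have hex : ∃ s, ℓ₀ ≤ L s ω := ⟨r, hsum'⟩
    set r₀ := Nat.find hex with hr₀
    have hfind : ℓ₀ ≤ L r₀ ω := Nat.find_spec hex
    have hle : r₀ ≤ r := Nat.find_min' hex hsum'
    have hr₀pos : 0 < r₀ := by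
      rcases Nat.eq_zero_or_pos r₀ with h | h
      · exfalso
        rw [h] at hfind
        simp only [hL, Finset.range_zero, Finset.sum_empty] at hfind
        linarith
      · exact h
    have hcr : cross r₀ ω := by
      refine ⟨hfind, ?_⟩
      have := Nat.find_min hex (show r₀ - 1 < r₀ by omega)
      exact not_le.1 this
    exact Set.mem_iUnion.2 ⟨r₀, ⟨fun i hi => hmatch i (lt_of_lt_of_le hi hle), hcr⟩⟩
  -- B r ⊆ union of cylinders
  have hBsub : ∀ r, B r ⊆ ⋃ v : Fin m → E, S r v := by
    intro r ω hω
    obtain ⟨hmatch, hcr⟩ := hω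
    set v : Fin m → E := fun i => ω i with hv
    have hagree : ∀ j, j < m + r → ω j = per v j := by
      intro j
      induction j using Nat.strong_induction_on with
      | _ j ih =>
        intro hj
        rcases lt_or_ge j m with h | h
        · rw [hper_lt v j h]
        · have hi : j - m < r := by omega
          have hj' : j = m + (j - m) := by omega
          have h1 : ω j = ω (j - m) := by
            conv_lhs => rw [hj']
            exact (hmatch (j - m) hi).symm
          have h2 : ω (j - m) = per v (j - m) := ih (j - m) (by omega) (by omega)
          have h3 : per v (j - m) = per v j := by
            conv_rhs => rw [hj', Nat.add_comm m (j - m)]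
            exact (hperiod v (j - m)).symm
          rw [h1, h2, h3]
    have hLeq : ∀ s, s ≤ r → L s ω = L s (per v) := by
      intro s hs
      apply Finset.sum_congr rfl
      intro i hi
      rw [Finset.mem_range] at hi
      rw [hagree i (by omega)]
    have hcrv : cross r (per v) := by
      refine ⟨?_, ?_⟩
      · rw [← hLeq r le_rfl]; exact hcr.1
      · rw [← hLeq (r-1) (by omega)]; exact hcr.2
    refine Set.mem_iUnion.2 ⟨v, ?_⟩
    have hSv : S r v = {ω : ℕ → E | ∀ j : Fin (m+r), ω (j:ℕ) = per v (j:ℕ)} := by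
      simp only [hS]
      rw [if_pos hcrv]
    rw [hSv]
    intro j
    exact hagree j j.isLt
  -- measure of S bounded by t
  have hSt : ∀ r (v : Fin m → E), μ (S r v) ≤ t r v := by
    intro r v
    simp only [hS, ht]
    by_cases hcr : cross r (per v)
    · rw [if_pos hcr, if_pos hcr]
      rw [hcyl (m + r) (fun j : Fin (m+r) => per v j)]
      -- rewrite as product of c
      have e1 : ENNReal.ofReal (∏ j : Fin (m+r), (q (per v (j:ℕ)) : ℝ) ^ (-δ))
          = ∏ j ∈ Finset.range (m+r), c (per v j) := by
        rw [ENNReal.ofReal_prod_of_nonneg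
          (fun j _ => Real.rpow_nonneg (le_of_lt (hqpos _)) _)]
        exact Fin.prod_univ_eq_prod_range (fun j => c (per v j)) (m + r)
      rw [e1]
      have e2 : ∏ j ∈ Finset.range (m+r), c (per v j)
          = (∏ j ∈ Finset.range r, c (per v j)) * ∏ j ∈ Finset.range m, c (per v (r + j)) := by
        rw [Nat.add_comm m r]
        exact Finset.prod_range_add (fun j => c (per v j)) r m
      rw [e2]
      have e3 : ∏ j ∈ Finset.range m, c (per v (r + j)) = ∏ j ∈ Finset.range m, c (per v j) :=
        prod_shift_periodic (fun j => c (per v j)) m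
          (fun j => by show c (per v (j + m)) = c (per v j); rw [hperiod]) r
      rw [e3]
      have e4 : ∏ j ∈ Finset.range m, c (per v j) = ∏ i : Fin m, c (v i) := by
        rw [← Fin.prod_univ_eq_prod_range (fun j => c (per v j)) m]
        apply Finset.prod_congr rfl
        intro i _
        rw [hper_lt v i i.isLt]
      rw [e4]
      apply mul_le_mul_left
      -- first factor ≤ K
      have e5 : ∏ j ∈ Finset.range r, c (per v j)
          = ENNReal.ofReal (Real.exp (∑ j ∈ Finset.range r, -δ * Real.log (q (per v j)))) := by
        rw [Real.exp_sum, ENNReal.ofReal_prod_of_nonneg (fun j _ => (Real.exp_pos _).le)]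
        apply Finset.prod_congr rfl
        intro j _
        exact hcexp _
      rw [e5, hK]
      apply ENNReal.ofReal_le_ofReal
      apply Real.exp_le_exp.2
      have : ∑ j ∈ Finset.range r, -δ * Real.log (q (per v j)) = -δ * L r (per v) := by
        rw [hL, Finset.mul_sum]
      rw [this]
      have h1 : ℓ₀ ≤ L r (per v) := hcr.1
      nlinarith
    · rw [if_neg hcr, if_neg hcr]
      simp
  -- measure of B bounded by sum of t
  have hBt : ∀ r, μ (B r) ≤ ∑ v : Fin m → E, t r v := by
    intro r
    calc μ (B r) ≤ μ (⋃ v : Fin m → E, S r v) := measure_mono (hBsub r)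
      _ ≤ ∑' v : Fin m → E, μ (S r v) := measure_iUnion_le _
      _ = ∑ v : Fin m → E, μ (S r v) := tsum_fintype _
      _ ≤ ∑ v : Fin m → E, t r v := Finset.sum_le_sum (fun v _ => hSt r v)
  -- tsum over r of t bounded
  have htsum : ∀ v : Fin m → E, ∑' r : ℕ, t r v ≤ K * ∏ i : Fin m, c (v i) := by
    intro v
    by_cases hE : ∃ r, cross r (per v)
    · obtain ⟨r₀, h0⟩ := hE
      rw [tsum_eq_single r₀ ?_]
      · simp only [ht]
        rw [if_pos h0]
      · intro b hb
        simp only [ht]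
        rw [if_neg]
        intro hb'
        exact hb (cross_unique (per v) b r₀ hb' h0)
    · have hz : ∀ r : ℕ, t r v = 0 := by
        intro r
        simp only [ht]
        rw [if_neg (fun h => hE ⟨r, h⟩)]
      simp [hz]
  calc μ {ω : ℕ → E | ∃ r : ℕ, 1 ≤ r ∧ (∀ i < r, ω i = ω (m + i)) ∧
        ℓ₀ ≤ ∑ i ∈ Finset.range r, Real.log (q (ω i))}
      ≤ μ (⋃ r, B r) := measure_mono hsub
    _ ≤ ∑' r : ℕ, μ (B r) := measure_iUnion_le _
    _ ≤ ∑' r : ℕ, ∑ v : Fin m → E, t r v := ENNReal.tsum_le_tsum hBt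
    _ = ∑ v : Fin m → E, ∑' r : ℕ, t r v :=
        Summable.tsum_finsetSum (fun v _ => ENNReal.summable)
    _ ≤ ∑ v : Fin m → E, K * ∏ i : Fin m, c (v i) := Finset.sum_le_sum (fun v _ => htsum v)
    _ = K * ∑ v : Fin m → E, ∏ i : Fin m, c (v i) := (Finset.mul_sum _ _ _).symm
    _ = K := by rw [hvsum, mul_one]
end

section
/- Let (u_a)_{a∈E} be a rational IFS with u_a(x) = (p_a/q_a)x + r_a/q_a, p_a = ±1 for all a ∈ E, satisfying the open set condition, with limit set J. Then every rational number in J is the image under the coding map π of an eventually periodic word in Eᴺ. -/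
/-- The value of the word `ω₁…ω_n` applied to `0`: `u_{ω₁}(u_{ω₂}(⋯ u_{ω_n}(0)))`. -/
def codingApprox {E : Type*} (u : E → ℝ → ℝ) (ω : ℕ → E) (n : ℕ) : ℝ :=
  (List.ofFn fun i : Fin n => ω i).foldr (fun a t => u a t) 0

/-- shift of a word -/
def wshift {E : Type*} (ω : ℕ → E) : ℕ → E := fun i => ω (i + 1)

lemma wshift_iterate {E : Type*} (ω : ℕ → E) : ∀ k, wshift^[k] ω = fun i => ω (i + k) := by
  intro k
  induction k with
  | zero => simp
  | succ k ih =>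
    rw [Function.iterate_succ_apply', ih]
    funext i
    simp [wshift]
    congr 1
    omega

lemma codingApprox_succ {E : Type*} (u : E → ℝ → ℝ) (ω : ℕ → E) (n : ℕ) :
    codingApprox u ω (n + 1) = u (ω 0) (codingApprox u (wshift ω) n) := by
  simp [codingApprox, List.ofFn_succ, wshift]

section aux

variable {E : Type*} {u : E → ℝ → ℝ} {C : ℝ}

lemma codingApprox_bound (hC0 : 0 ≤ C) (hC : ∀ a, |u a 0| ≤ C)
    (hLip : ∀ a s t, |u a s - u a t| ≤ 2⁻¹ * |s - t|) :
    ∀ (n : ℕ) (ω : ℕ → E), |codingApprox u ω n| ≤ 2 * C := by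
  intro n
  induction n with
  | zero => intro ω; simp [codingApprox]; linarith
  | succ n ih =>
    intro ω
    rw [codingApprox_succ]
    have h1 := hLip (ω 0) (codingApprox u (wshift ω) n) 0
    have h2 := hC (ω 0)
    have h3 := ih (wshift ω)
    rw [sub_zero] at h1
    calc |u (ω 0) (codingApprox u (wshift ω) n)|
        = |(u (ω 0) (codingApprox u (wshift ω) n) - u (ω 0) 0) + u (ω 0) 0| := by ring_nf
      _ ≤ |u (ω 0) (codingApprox u (wshift ω) n) - u (ω 0) 0| + |u (ω 0) 0| := abs_add_le _ _
      _ ≤ 2 * C := by linarith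

lemma codingApprox_increment (hC : ∀ a, |u a 0| ≤ C)
    (hLip : ∀ a s t, |u a s - u a t| ≤ 2⁻¹ * |s - t|) :
    ∀ (n : ℕ) (ω : ℕ → E),
      |codingApprox u ω (n + 1) - codingApprox u ω n| ≤ C * (2⁻¹ : ℝ) ^ n := by
  intro n
  induction n with
  | zero =>
    intro ω
    have : codingApprox u ω 1 = u (ω 0) 0 := by
      rw [codingApprox_succ]; simp [codingApprox]
    simp [this, codingApprox, hC (ω 0)]
  | succ n ih =>
    intro ω
    rw [codingApprox_succ, codingApprox_succ u ω n]
    have h1 := hLip (ω 0) (codingApprox u (wshift ω) (n + 1)) (codingApprox u (wshift ω) n)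
    have h2 := ih (wshift ω)
    have hC0 : (0:ℝ) ≤ 2⁻¹ := by norm_num
    calc |u (ω 0) (codingApprox u (wshift ω) (n + 1)) - u (ω 0) (codingApprox u (wshift ω) n)|
        ≤ 2⁻¹ * |codingApprox u (wshift ω) (n + 1) - codingApprox u (wshift ω) n| := h1
      _ ≤ 2⁻¹ * (C * (2⁻¹) ^ n) := by nlinarith
      _ = C * (2⁻¹) ^ (n + 1) := by ring

lemma foldr_lipschitz (hLip : ∀ a s t, |u a s - u a t| ≤ 2⁻¹ * |s - t|) :
    ∀ (L : List E) (s t : ℝ),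
      |L.foldr (fun a t => u a t) s - L.foldr (fun a t => u a t) t|
        ≤ (2⁻¹ : ℝ) ^ L.length * |s - t| := by
  intro L
  induction L with
  | nil => intro s t; simp
  | cons a L ih =>
    intro s t
    simp only [List.foldr_cons, List.length_cons]
    calc |u a (L.foldr (fun a t => u a t) s) - u a (L.foldr (fun a t => u a t) t)|
        ≤ 2⁻¹ * |L.foldr (fun a t => u a t) s - L.foldr (fun a t => u a t) t| := hLip _ _ _
      _ ≤ 2⁻¹ * ((2⁻¹ : ℝ) ^ L.length * |s - t|) := by
          have := ih s t
          nlinarith [abs_nonneg (L.foldr (fun a t => u a t) s - L.foldr (fun a t => u a t) t)]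
      _ = (2⁻¹ : ℝ) ^ (L.length + 1) * |s - t| := by ring

lemma codingApprox_exists_limit (hC0 : 0 ≤ C) (hC : ∀ a, |u a 0| ≤ C)
    (hLip : ∀ a s t, |u a s - u a t| ≤ 2⁻¹ * |s - t|) (ω : ℕ → E) :
    ∃ y, Filter.Tendsto (codingApprox u ω) Filter.atTop (nhds y) := by
  have hcauchy : CauchySeq (codingApprox u ω) := by
    apply cauchySeq_of_le_geometric 2⁻¹ C (by norm_num)
    intro n
    rw [Real.dist_eq, abs_sub_comm]
    exact codingApprox_increment hC hLip n ω
  exact cauchySeq_tendsto_of_complete hcauchy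

end aux

theorem rationals_come_from_eventually_periodic_words (E : Type*) [Fintype E] [Nonempty E]
    (p r : E → ℤ) (q : E → ℕ)
    (hp : ∀ a, p a = 1 ∨ p a = -1) (hq : ∀ a, 2 ≤ q a)
    (u : E → ℝ → ℝ) (hu : ∀ a t, u a t = ((p a : ℝ) / q a) * t + (r a : ℝ) / q a)
    (hosc : ∃ W : Set ℝ, IsOpen W ∧ (∀ a, u a '' W ⊆ W) ∧
      Pairwise fun a b => Disjoint (u a '' W) (u b '' W))
    (J : Set ℝ)
    (hJ : J = {y : ℝ | ∃ ω : ℕ → E,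
      Filter.Tendsto (codingApprox u ω) Filter.atTop (nhds y)}) :
    ∀ x : ℚ, (x : ℝ) ∈ J →
      ∃ ω : ℕ → E, Filter.Tendsto (codingApprox u ω) Filter.atTop (nhds (x : ℝ)) ∧
        ∃ N m : ℕ, 1 ≤ m ∧ ∀ n, N ≤ n → ω (n + m) = ω n := by
  intro x hx
  rw [hJ] at hx
  obtain ⟨ω, hω⟩ := hx
  -- uniform size bound on u a 0
  obtain ⟨C, hC0, hC⟩ : ∃ C : ℝ, 0 ≤ C ∧ ∀ a, |u a 0| ≤ C := by
    refine ⟨Finset.univ.sup' Finset.univ_nonempty (fun a => |u a 0|), ?_, ?_⟩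
    · exact le_trans (abs_nonneg _)
        (Finset.le_sup' (fun a => |u a 0|) (Finset.mem_univ (Classical.arbitrary E)))
    · intro a; exact Finset.le_sup' (fun a => |u a 0|) (Finset.mem_univ a)
  -- the maps are 1/2-Lipschitz
  have hq2 : ∀ a, (2:ℝ) ≤ (q a : ℝ) := fun a => by exact_mod_cast hq a
  have hqpos : ∀ a, (0:ℝ) < (q a : ℝ) := fun a => lt_of_lt_of_le (by norm_num) (hq2 a)
  have hLip : ∀ a s t, |u a s - u a t| ≤ 2⁻¹ * |s - t| := by
    intro a s t
    have h1 : u a s - u a t = ((p a : ℝ) / q a) * (s - t) := by rw [hu, hu]; ring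
    rw [h1, abs_mul]
    have hpa : |(p a : ℝ)| = 1 := by rcases hp a with h | h <;> simp [h]
    have h2 : |((p a : ℝ) / q a)| ≤ 2⁻¹ := by
      rw [abs_div, hpa, abs_of_pos (hqpos a), div_le_iff₀ (hqpos a)]
      linarith [hq2 a]
    exact mul_le_mul_of_nonneg_right h2 (abs_nonneg _) |>.trans_eq rfl
      |>.trans (le_of_eq rfl)
  -- the coding map π
  choose piF hpiF using fun τ : ℕ → E => codingApprox_exists_limit hC0 hC hLip τ
  have hx' : (x : ℝ) = piF ω := tendsto_nhds_unique hω (hpiF ω)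
  -- one-step relation
  have hstep : ∀ τ : ℕ → E, piF τ = u (τ 0) (piF (wshift τ)) := by
    intro τ
    have h1 : Filter.Tendsto (fun n => codingApprox u τ (n + 1)) Filter.atTop
        (nhds (piF τ)) := (hpiF τ).comp (Filter.tendsto_add_atTop_nat 1)
    have hcont : Continuous (u (τ 0)) := by
      have : u (τ 0) = fun t => ((p (τ 0) : ℝ) / q (τ 0)) * t + (r (τ 0) : ℝ) / q (τ 0) :=
        funext (hu (τ 0))
      rw [this]; continuity
    have h2 : Filter.Tendsto (fun n => u (τ 0) (codingApprox u (wshift τ) n)) Filter.atTop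
        (nhds (u (τ 0) (piF (wshift τ)))) :=
      (hcont.tendsto _).comp (hpiF (wshift τ))
    have h3 : (fun n => codingApprox u τ (n + 1))
        = fun n => u (τ 0) (codingApprox u (wshift τ) n) :=
      funext fun n => codingApprox_succ u τ n
    rw [h3] at h1
    exact tendsto_nhds_unique h1 h2
  -- k-step expansion
  have hfold : ∀ (k : ℕ) (τ : ℕ → E),
      piF τ = (List.ofFn fun i : Fin k => τ i).foldr (fun a t => u a t)
        (piF (wshift^[k] τ)) := by
    intro k
    induction k with
    | zero => intro τ; simp
    | succ k ih =>
      intro τ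
      have hl : (List.ofFn fun i : Fin (k + 1) => τ i)
          = τ 0 :: List.ofFn fun i : Fin k => wshift τ i := by
        rw [List.ofFn_succ]
        rfl
      rw [hl, List.foldr_cons, Function.iterate_succ_apply, ← ih (wshift τ), hstep τ]
  -- bound on π
  have hboundπ : ∀ τ : ℕ → E, |piF τ| ≤ 2 * C := by
    intro τ
    have h1 : Filter.Tendsto (fun n => |codingApprox u τ n|) Filter.atTop
        (nhds |piF τ|) := (continuous_abs.tendsto _).comp (hpiF τ)
    exact le_of_tendsto h1 (Filter.Eventually.of_forall fun n =>
      codingApprox_bound hC0 hC hLip n τ)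
  -- denominators stay bounded along the shift orbit
  set d : ℕ := x.den with hd
  have hdpos : (0:ℝ) < (d : ℝ) := by exact_mod_cast x.pos
  have hdne : (d : ℝ) ≠ 0 := ne_of_gt hdpos
  have hden : ∀ k : ℕ, ∃ z : ℤ, piF (wshift^[k] ω) = (z : ℝ) / (d : ℝ) := by
    intro k
    induction k with
    | zero =>
      refine ⟨x.num, ?_⟩
      simp only [Function.iterate_zero, id_eq]
      rw [← hx', Rat.cast_def, hd]
    | succ k ih =>
      obtain ⟨z, hz⟩ := ih
      set τ := wshift^[k] ω with hτ
      set a := τ 0 with ha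
      refine ⟨p a * ((q a : ℤ) * z - r a * (d : ℤ)), ?_⟩
      have heq : ((p a : ℝ) / q a) * piF (wshift τ) + (r a : ℝ) / q a = (z : ℝ) / d := by
        rw [← hu, ← hstep]; exact hz
      have hiter : wshift^[k + 1] ω = wshift τ := by
        rw [hτ, Function.iterate_succ_apply']
      rw [hiter]
      have hqne : (q a : ℝ) ≠ 0 := ne_of_gt (hqpos a)
      have hp2 : (p a : ℝ) * (p a : ℝ) = 1 := by
        rcases hp a with h | h <;> rw [h] <;> norm_num
      have hth : ((p a : ℝ) * piF (wshift τ) + (r a : ℝ)) / (q a : ℝ) = (z : ℝ) / d := by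
        rw [← heq]; ring
      rw [div_eq_div_iff hqne hdne] at hth
      push_cast
      rw [eq_div_iff hdne]
      linear_combination (p a : ℝ) * hth - (piF (wshift τ) * (d : ℝ)) * hp2
  -- pigeonhole: two equal values along the orbit
  set M : ℤ := ⌈2 * C * (d : ℝ)⌉ with hM
  have hmem : ∀ k : ℕ, (hden k).choose ∈ Finset.Icc (-M) M := by
    intro k
    have hz := (hden k).choose_spec
    set z := (hden k).choose
    have h1 : |(z : ℝ) / d| ≤ 2 * C := by rw [← hz]; exact hboundπ (wshift^[k] ω)
    rw [abs_div, abs_of_pos hdpos, div_le_iff₀ hdpos] at h1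
    have h2 : |(z : ℝ)| ≤ (M : ℝ) := h1.trans (Int.le_ceil _)
    have h3 : |z| ≤ M := by
      rw [← Int.cast_abs] at h2
      exact_mod_cast h2
    rw [Finset.mem_Icc]
    exact abs_le.mp h3
  obtain ⟨k₁, k₂, hne, hvaleq⟩ :=
    Finite.exists_ne_map_eq_of_infinite
      (fun k : ℕ => (⟨(hden k).choose, hmem k⟩ : (Finset.Icc (-M) M : Finset ℤ)))
  have hpieq : piF (wshift^[k₁] ω) = piF (wshift^[k₂] ω) := by
    rw [(hden k₁).choose_spec, (hden k₂).choose_spec]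
    have : (hden k₁).choose = (hden k₂).choose := congrArg Subtype.val hvaleq
    rw [this]
  obtain ⟨n, n', hnn, hval⟩ : ∃ n n' : ℕ, n < n' ∧
      piF (wshift^[n] ω) = piF (wshift^[n'] ω) := by
    rcases hne.lt_or_gt with h | h
    · exact ⟨k₁, k₂, h, hpieq⟩
    · exact ⟨k₂, k₁, h, hpieq.symm⟩
  set m : ℕ := n' - n with hm
  have hm1 : 1 ≤ m := by omega
  have hn' : n' = n + m := by omega
  -- the eventually periodic word
  set ω' : ℕ → E := fun i => if i < n then ω i else ω (n + (i - n) % m) with hω'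
  refine ⟨ω', ?_, n, m, hm1, ?_⟩
  · -- convergence to x
    have hτval : ∀ i, wshift^[n] ω' i = ω (n + i % m) := by
      intro i
      simp only [wshift_iterate, hω']
      rw [if_neg (by omega)]
      have e : i + n - n = i := by omega
      rw [e]
    set τ := wshift^[n] ω' with hτdef
    -- τ is m-periodic under shift iteration
    have hfix : wshift^[m] τ = τ := by
      funext i
      rw [hτdef, ← Function.iterate_add_apply]
      simp only [wshift_iterate, hω']
      rw [if_neg (by omega), if_neg (by omega)]
      have e1 : i + (m + n) - n = i + m := by omega
      have e2 : i + n - n = i := by omega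
      rw [e1, e2, Nat.add_mod_right]
    set L : List E := List.ofFn fun i : Fin m => ω (n + i) with hL
    have hLlen : L.length = m := by simp [hL]
    -- τ's first m letters
    have hLe1 : (List.ofFn fun i : Fin m => τ i) = L := by
      rw [hL]
      congr 1
      funext i
      rw [hτval i, Nat.mod_eq_of_lt i.isLt]
    -- (wshift^[n] ω)'s first m letters
    have hLe2 : (List.ofFn fun i : Fin m => wshift^[n] ω i) = L := by
      rw [hL]
      congr 1
      funext i
      simp only [wshift_iterate]
      rw [Nat.add_comm]
    set y := piF (wshift^[n] ω) with hy
    have h1 : y = L.foldr (fun a t => u a t) y := by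
      conv_lhs => rw [hy, hfold m (wshift^[n] ω)]
      rw [hLe2, ← Function.iterate_add_apply]
      have hmn : m + n = n' := by omega
      rw [hmn, ← hval]
    have h2 : piF τ = L.foldr (fun a t => u a t) (piF τ) := by
      conv_lhs => rw [hfold m τ]
      rw [hLe1, hfix]
    have h3 := foldr_lipschitz hLip L (piF τ) y
    rw [← h2, ← h1, hLlen] at h3
    have h4 : (2⁻¹ : ℝ) ^ m ≤ (2⁻¹ : ℝ) ^ 1 :=
      pow_le_pow_of_le_one (by norm_num) (by norm_num) hm1
    have h5 : |piF τ - y| = 0 := by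
      have h6 := abs_nonneg (piF τ - y)
      nlinarith
    have h7 : piF τ = y := by
      have := abs_eq_zero.mp h5
      linarith [sub_eq_zero.mp this]
    -- now conclude
    have hpref : (List.ofFn fun i : Fin n => ω' i) = List.ofFn fun i : Fin n => ω i := by
      congr 1
      funext i
      simp only [hω']
      rw [if_pos i.isLt]
    have hfinal : piF ω' = (x : ℝ) := by
      rw [hfold n ω', hpref, ← hτdef, h7, hy, ← hfold n ω, hx']
    rw [← hfinal]
    exact hpiF ω'
  · -- eventual periodicity
    intro j hj
    simp only [hω']
    rw [if_neg (by omega), if_neg (by omega)]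
    have h1 : j + m - n = (j - n) + m := by omega
    rw [h1, Nat.add_mod_right]
end
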